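/- Suppose the limit β̄(x, y) = lim_{ε→0⁺} δ̄_{ε⁻¹}(δ̄_ε(x)·δ̄_ε(y)) exists for all x, y ∈ H(1), uniformly on compacts. Then for every ū ≥ 0 the limit A(ū) = lim_{ε→0⁺} (1/ε)·g(ε²·ū) exists, uniformly for ū in compact subsets of [0,∞). Consequently the identity map from (H(1), d) to (H(1), ρ) is metrically differentiable everywhere. -/

import Mathlib

/-- The Heisenberg group H(1) as a set: ℝ² × ℝ. -/
abbrev H : Type := (ℝ × ℝ) × ℝ

/-- Euclidean norm on ℝ². -/
noncomputable def enorm2 (x : ℝ × ℝ) : ℝ := Real.sqrt (x.1 ^ 2 + x.2 ^ 2)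

/-- Canonical symplectic form on ℝ². -/
def omega2 (x y : ℝ × ℝ) : ℝ := x.1 * y.2 - x.2 * y.1

/-- Heisenberg group operation. -/
def Hmul (p q : H) : H :=
  ((p.1.1 + q.1.1, p.1.2 + q.1.2), p.2 + q.2 + 2 * omega2 p.1 q.1)

/-- Heisenberg group inverse. -/
def Hinv (p : H) : H := ((-p.1.1, -p.1.2), -p.2)

/-- Neutral element. -/
def He : H := ((0, 0), 0)

/-- The gauge d₀(x,x̄) = max {‖x‖, √|x̄|}. -/
noncomputable def d0 (p : H) : ℝ := max (enorm2 p.1) (Real.sqrt |p.2|)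
/-- The function G(t) = k(t) + t², whose inverse is g. -/
def Ginv (k : ℝ → ℝ) (t : ℝ) : ℝ := k t + t ^ 2

/-- The gauge ρ₀(x,x̄) = max {‖x‖, g(|x̄|)}. -/
noncomputable def rho0 (g : ℝ → ℝ) (p : H) : ℝ := max (enorm2 p.1) (g |p.2|)

/-- The dilatations δ̄_ε(x,x̄) = (εx, sgn(x̄)·g⁻¹(ε·g(|x̄|))). -/
noncomputable def bdil (k g : ℝ → ℝ) (ε : ℝ) (p : H) : H :=
  ((ε * p.1.1, ε * p.1.2), Real.sign p.2 * Ginv k (ε * g |p.2|))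

/-- The usual anisotropic dilations δ_ε(x,x̄) = (εx, ε²x̄). -/
def hdil (ε : ℝ) (p : H) : H := ((ε * p.1.1, ε * p.1.2), ε ^ 2 * p.2)

/-! Applying A4 to the horizontal points `((1, 0), 0)` and `((0, 1/2), 0)`, whose product at
scale `ε` has centre `ε²`, shows that `G (g (ε²) / ε)` converges, where `G t = k t + t²`.
Since `G` is strictly increasing on `[0, ∞)`, `g (ε²) / ε` itself converges to some `L`, and
`L ≤ 1` because `g t ≤ √t`. Substituting `ε √u` for `ε` gives
`g (ε² u) / ε = √u · g ((ε √u)²) / (ε √u)`, hence `A u = L √u`, uniformly on bounded sets.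
The blow-up of `ρ` at any point is then the gauge `max ‖x‖ (L √|x̄|)`, which is homogeneous
for `δ_ε` and, as `L ≤ 1`, subadditive. -/

open Filter Topology Set

lemma enorm2_eq_norm (x : ℝ × ℝ) : enorm2 x = ‖(⟨x.1, x.2⟩ : ℂ)‖ := by
  rw [enorm2, Complex.norm_def, Complex.normSq_mk, sq, sq]

lemma enorm2_nonneg (x : ℝ × ℝ) : 0 ≤ enorm2 x := Real.sqrt_nonneg _

lemma enorm2_add_le (x y : ℝ × ℝ) : enorm2 (x + y) ≤ enorm2 x + enorm2 y := by
  rw [enorm2_eq_norm, enorm2_eq_norm, enorm2_eq_norm]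
  exact norm_add_le (⟨x.1, x.2⟩ : ℂ) ⟨y.1, y.2⟩

lemma enorm2_smul (ε : ℝ) (x : ℝ × ℝ) : enorm2 (ε * x.1, ε * x.2) = |ε| * enorm2 x := by
  rw [enorm2, enorm2, ← Real.sqrt_sq_eq_abs, ← Real.sqrt_mul (sq_nonneg ε)]
  ring_nf

lemma abs_omega2_le (x y : ℝ × ℝ) : |omega2 x y| ≤ enorm2 x * enorm2 y := by
  have h := Complex.abs_im_le_norm (starRingEnd ℂ ⟨x.1, x.2⟩ * ⟨y.1, y.2⟩)
  rwa [norm_mul, Complex.norm_conj, ← enorm2_eq_norm, ← enorm2_eq_norm, Complex.mul_im,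
    Complex.conj_re, Complex.conj_im, neg_mul, ← sub_eq_add_neg] at h

lemma Hmul_Hinv_Hmul (x w : H) : Hmul (Hinv x) (Hmul x w) = w := by
  simp only [Hmul, Hinv, omega2]
  ext <;> simp only [neg_add_cancel_left]
  ring

lemma rho0_mul_sqrt_hdil (L : ℝ) {ε : ℝ} (hε : 0 ≤ ε) (v : H) :
    rho0 (fun u => L * √u) (hdil ε v) = ε * rho0 (fun u => L * √u) v := by
  simp only [rho0, hdil, enorm2_smul, abs_of_nonneg hε, abs_mul, abs_pow,
    Real.sqrt_mul (sq_nonneg ε), Real.sqrt_sq hε]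
  rw [mul_left_comm L ε, mul_max_of_nonneg _ _ hε]

lemma rho0_mul_sqrt_Hmul_le {L : ℝ} (hL0 : 0 ≤ L) (hL1 : L ≤ 1) (v w : H) :
    rho0 (fun u => L * √u) (Hmul v w) ≤ rho0 (fun u => L * √u) v + rho0 (fun u => L * √u) w := by
  set a := rho0 (fun u => L * √u) v
  set b := rho0 (fun u => L * √u) w
  have hva : enorm2 v.1 ≤ a := le_max_left _ _
  have hwb : enorm2 w.1 ≤ b := le_max_left _ _
  have hv : L ^ 2 * |v.2| ≤ a ^ 2 := by
    rw [← Real.sq_sqrt (abs_nonneg v.2), ← mul_pow]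
    exact pow_le_pow_left₀ (by positivity) (le_max_right _ _) 2
  have hw : L ^ 2 * |w.2| ≤ b ^ 2 := by
    rw [← Real.sq_sqrt (abs_nonneg w.2), ← mul_pow]
    exact pow_le_pow_left₀ (by positivity) (le_max_right _ _) 2
  have hvw : L ^ 2 * |omega2 v.1 w.1| ≤ a * b :=
    calc L ^ 2 * |omega2 v.1 w.1| ≤ 1 * (enorm2 v.1 * enorm2 w.1) :=
          mul_le_mul (pow_le_one₀ hL0 hL1) (abs_omega2_le _ _) (abs_nonneg _) zero_le_one
      _ ≤ a * b := by
          rw [one_mul]; exact mul_le_mul hva hwb (enorm2_nonneg _) ((enorm2_nonneg _).trans hva)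
  have hcentre : L ^ 2 * |v.2 + w.2 + 2 * omega2 v.1 w.1| ≤ (a + b) ^ 2 := by
    have h := abs_add_three v.2 w.2 (2 * omega2 v.1 w.1)
    rw [abs_mul, abs_two] at h
    nlinarith [mul_le_mul_of_nonneg_left h (sq_nonneg L)]
  refine max_le ((enorm2_add_le v.1 w.1).trans (add_le_add hva hwb)) ?_
  show L * √|v.2 + w.2 + 2 * omega2 v.1 w.1| ≤ a + b
  rw [← Real.sqrt_sq hL0, ← Real.sqrt_mul (sq_nonneg L)]
  exact Real.sqrt_le_iff.2 ⟨add_nonneg ((enorm2_nonneg _).trans hva) ((enorm2_nonneg _).trans hwb),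
    hcentre⟩

lemma one_div_mul_rho0_hdil (g : ℝ → ℝ) {ε : ℝ} (hε : 0 < ε) (v : H) :
    1 / ε * rho0 g (hdil ε v) = max (enorm2 v.1) (1 / ε * g (ε ^ 2 * |v.2|)) := by
  rw [rho0, mul_max_of_nonneg _ _ (one_div_nonneg.2 hε.le)]
  simp only [hdil, enorm2_smul, abs_mul, abs_pow, abs_of_pos hε]
  field_simp

lemma tendstoUniformlyOn_nhdsGT_zero_iff {α β : Type*} [PseudoMetricSpace β] {F : ℝ → α → β}
    {f : α → β} {s : Set α} :
    TendstoUniformlyOn F f (𝓝[>] 0) s ↔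
      ∀ η : ℝ, 0 < η → ∃ ε₀ : ℝ, 0 < ε₀ ∧
        ∀ ε : ℝ, 0 < ε → ε < ε₀ → ∀ x ∈ s, dist (F ε x) (f x) < η := by
  simp only [Metric.tendstoUniformlyOn_iff, (nhdsGT_basis (0 : ℝ)).eventually_iff, mem_Ioo,
    and_imp, dist_comm (f _)]

theorem StrictMonoOn.tendsto_of_tendsto_comp {ι α β : Type*} [LinearOrder α] [TopologicalSpace α]
    [OrderTopology α] [LinearOrder β] [TopologicalSpace β] [OrderTopology β] {f : α → β}
    {m c : α} (hf : StrictMonoOn f (Ici m)) (hc : m ≤ c) {φ : ι → α} {l : Filter ι}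
    (hφ : ∀ᶠ i in l, m ≤ φ i) (h : Tendsto (f ∘ φ) l (𝓝 (f c))) : Tendsto φ l (𝓝 c) := by
  rw [tendsto_order] at h ⊢
  refine ⟨fun a ha => ?_, fun b hb => ?_⟩
  · rcases lt_or_ge a m with ham | hma
    · exact hφ.mono fun i hi => ham.trans_le hi
    · filter_upwards [hφ, h.1 (f a) (hf hma hc ha)] with i hi hfi
      exact (hf.lt_iff_lt hma hi).1 hfi
  · filter_upwards [hφ, h.2 (f b) (hf hc (hc.trans hb.le) hb)] with i hi hfi
    exact (hf.lt_iff_lt hi (hc.trans hb.le)).1 hfi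

lemma tendstoUniformlyOn_sqrt_mul_comp {φ : ℝ → ℝ} {L : ℝ} (hφ : Tendsto φ (𝓝[>] 0) (𝓝 L))
    (R : ℝ) :
    TendstoUniformlyOn (fun ε u => √u * φ (ε * √u)) (fun u => L * √u) (𝓝[>] 0) (Iic R) := by
  rw [Metric.tendstoUniformlyOn_iff]
  intro η hη
  set S := √R + 1
  have hS : 0 < S := by positivity
  obtain ⟨δ, hδ, hφδ⟩ :=
    (nhdsGT_basis (0 : ℝ)).eventually_iff.1 (Metric.tendsto_nhds.1 hφ (η / S) (by positivity))
  filter_upwards [Ioo_mem_nhdsGT (div_pos hδ hS)] with ε ⟨hε, hεδ⟩ u hu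
  rcases (Real.sqrt_nonneg u).eq_or_lt with hu0 | hu0
  · simpa [← hu0] using hη
  have huS : √u < S := (Real.sqrt_le_sqrt hu).trans_lt (lt_add_one _)
  have ht : ε * √u ∈ Ioo 0 δ :=
    ⟨by positivity, by simpa [div_mul_cancel₀ δ hS.ne'] using mul_lt_mul'' hεδ huS hε.le hu0.le⟩
  calc dist (L * √u) (√u * φ (ε * √u)) = √u * dist (φ (ε * √u)) L := by
        rw [Real.dist_eq, Real.dist_eq, ← abs_of_pos hu0, ← abs_mul, abs_of_pos hu0, abs_sub_comm]
        ring_nf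
    _ ≤ S * dist (φ (ε * √u)) L := by gcongr
    _ < S * (η / S) := by gcongr; exact hφδ ht
    _ = η := mul_div_cancel₀ η hS.ne'

section

variable {k g : ℝ → ℝ}

lemma Ginv_nonneg (hk_nonneg : ∀ t ∈ Ici (0 : ℝ), 0 ≤ k t) {t : ℝ} (ht : 0 ≤ t) :
    0 ≤ Ginv k t :=
  add_nonneg (hk_nonneg t ht) (sq_nonneg t)

lemma strictMonoOn_Ginv (hk_mono : StrictMonoOn k (Ici 0)) :
    StrictMonoOn (Ginv k) (Ici 0) :=
  fun _ hp _ hq hpq => add_lt_add (hk_mono hp hq hpq) (pow_lt_pow_left₀ hpq hp two_ne_zero)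

lemma g_le_sqrt (hk_nonneg : ∀ t ∈ Ici (0 : ℝ), 0 ≤ k t)
    (hg_right : ∀ t ∈ Ici (0 : ℝ), 0 ≤ g t ∧ Ginv k (g t) = t) {t : ℝ} (ht : 0 ≤ t) :
    g t ≤ √t := by
  obtain ⟨hgt, hG⟩ := hg_right t ht
  rw [Real.le_sqrt hgt ht]
  rw [Ginv] at hG
  linarith [hk_nonneg (g t) hgt]

lemma g_zero (hk_nonneg : ∀ t ∈ Ici (0 : ℝ), 0 ≤ k t)
    (hg_right : ∀ t ∈ Ici (0 : ℝ), 0 ≤ g t ∧ Ginv k (g t) = t) : g 0 = 0 :=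
  le_antisymm (by simpa using g_le_sqrt hk_nonneg hg_right le_rfl) (hg_right 0 self_mem_Ici).1

lemma bdil_inv_Hmul_bdil_horizontal {x y : ℝ × ℝ} (hxy : 2 * omega2 x y = 1)
    {ε : ℝ} (hε : 0 < ε) :
    bdil k g ε⁻¹ (Hmul (bdil k g ε (x, 0)) (bdil k g ε (y, 0))) =
      ((x.1 + y.1, x.2 + y.2), Ginv k (ε⁻¹ * g (ε ^ 2))) := by
  have hcentre : 2 * omega2 (ε * x.1, ε * x.2) (ε * y.1, ε * y.2) = ε ^ 2 := by
    simp only [omega2] at hxy ⊢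
    linear_combination ε ^ 2 * hxy
  simp only [bdil, Hmul, Real.sign_zero, zero_mul, zero_add, hcentre,
    Real.sign_of_pos (pow_pos hε 2), abs_of_pos (pow_pos hε 2), one_mul, ← mul_add,
    inv_mul_cancel_left₀ hε.ne']

lemma tendsto_Ginv_inv_mul_g_sq {x y : ℝ × ℝ} {b : H}
    (hβ : Tendsto (fun ε => bdil k g ε⁻¹ (Hmul (bdil k g ε (x, 0)) (bdil k g ε (y, 0))))
      (𝓝[>] 0) (𝓝 b))
    (hxy : 2 * omega2 x y = 1) :
    Tendsto (fun ε => Ginv k (ε⁻¹ * g (ε ^ 2))) (𝓝[>] 0) (𝓝 b.2) :=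
  ((continuous_snd.tendsto _).comp hβ).congr' <| eventually_mem_nhdsWithin.mono fun ε hε => by
    rw [Function.comp_apply, bdil_inv_Hmul_bdil_horizontal hxy hε]

lemma exists_tendsto_inv_mul_g_sq (hk_mono : StrictMonoOn k (Ici 0))
    (hk_nonneg : ∀ t ∈ Ici (0 : ℝ), 0 ≤ k t)
    (hg_right : ∀ t ∈ Ici (0 : ℝ), 0 ≤ g t ∧ Ginv k (g t) = t) {M : ℝ}
    (hM : Tendsto (fun ε => Ginv k (ε⁻¹ * g (ε ^ 2))) (𝓝[>] 0) (𝓝 M)) :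
    ∃ L, 0 ≤ L ∧ L ≤ 1 ∧ Tendsto (fun ε => ε⁻¹ * g (ε ^ 2)) (𝓝[>] 0) (𝓝 L) := by
  have hφ0 : ∀ᶠ ε in 𝓝[>] (0 : ℝ), 0 ≤ ε⁻¹ * g (ε ^ 2) :=
    eventually_mem_nhdsWithin.mono fun ε hε =>
      mul_nonneg (inv_nonneg.2 (le_of_lt hε)) (hg_right _ (sq_nonneg ε)).1
  have hφ1 : ∀ᶠ ε in 𝓝[>] (0 : ℝ), ε⁻¹ * g (ε ^ 2) ≤ 1 :=
    eventually_mem_nhdsWithin.mono fun ε (hε : 0 < ε) => (inv_mul_le_one₀ hε).2 <| by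
      simpa [Real.sqrt_sq hε.le] using g_le_sqrt hk_nonneg hg_right (sq_nonneg ε)
  have hM0 : 0 ≤ M := ge_of_tendsto hM (hφ0.mono fun _ h => Ginv_nonneg hk_nonneg h)
  obtain ⟨hgM, hGgM⟩ := hg_right M hM0
  have hφ := (strictMonoOn_Ginv hk_mono).tendsto_of_tendsto_comp hgM hφ0 (by rwa [hGgM])
  exact ⟨g M, hgM, le_of_tendsto hφ hφ1, hφ⟩

lemma tendstoUniformlyOn_one_div_mul_g (hk_nonneg : ∀ t ∈ Ici (0 : ℝ), 0 ≤ k t)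
    (hg_right : ∀ t ∈ Ici (0 : ℝ), 0 ≤ g t ∧ Ginv k (g t) = t) {L : ℝ}
    (hφ : Tendsto (fun ε => ε⁻¹ * g (ε ^ 2)) (𝓝[>] 0) (𝓝 L)) {C : Set ℝ} (hC0 : C ⊆ Ici 0)
    (hC : BddAbove C) :
    TendstoUniformlyOn (fun ε u => 1 / ε * g (ε ^ 2 * u)) (fun u => L * √u) (𝓝[>] 0) C := by
  obtain ⟨R, hR⟩ := hC
  refine ((tendstoUniformlyOn_sqrt_mul_comp hφ R).mono hR).congr ?_
  filter_upwards [self_mem_nhdsWithin] with ε (hε : 0 < ε) u hu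
  have hu0 : 0 ≤ u := hC0 hu
  rcases hu0.eq_or_lt with rfl | hu0
  · simp [g_zero hk_nonneg hg_right]
  have hsu : 0 < √u := Real.sqrt_pos.2 hu0
  simp only [mul_pow, Real.sq_sqrt hu0.le]
  field_simp

end

lemma tendstoUniformlyOn_one_div_mul_rho0_hdil {g A : ℝ → ℝ} {K : Set H}
    (hA : TendstoUniformlyOn (fun ε u => 1 / ε * g (ε ^ 2 * u)) A (𝓝[>] 0)
      ((fun v : H => |v.2|) '' K)) :
    TendstoUniformlyOn (fun ε v => 1 / ε * rho0 g (hdil ε v)) (rho0 A) (𝓝[>] 0) K := by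
  have hK := (hA.comp fun v : H => |v.2|).mono (subset_preimage_image _ K)
  rw [Metric.tendstoUniformlyOn_iff] at hK ⊢
  intro η hη
  filter_upwards [hK η hη, self_mem_nhdsWithin] with ε hεK (hε : 0 < ε) v hv
  rw [one_div_mul_rho0_hdil g hε, rho0, Real.dist_eq, max_comm, max_comm (enorm2 v.1)]
  exact (abs_max_sub_max_le_abs _ _ _).trans_lt (hεK v hv)

theorem A4_implies_metric_differentiability_general
(k g : ℝ → ℝ)
    (hk_mono : StrictMonoOn k (Set.Ici 0))
    (hk_nonneg : ∀ t ∈ Set.Ici (0:ℝ), 0 ≤ k t)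
    (hg_right : ∀ t ∈ Set.Ici (0:ℝ), 0 ≤ g t ∧ Ginv k (g t) = t)
    (β : H → H → H)
    (hA4 : ∀ K : Set H, IsCompact K → ∀ η : ℝ, 0 < η → ∃ ε₀ : ℝ, 0 < ε₀ ∧
      ∀ ε : ℝ, 0 < ε → ε < ε₀ → ∀ x ∈ K, ∀ y ∈ K,
        ‖bdil k g ε⁻¹ (Hmul (bdil k g ε x) (bdil k g ε y)) - β x y‖ < η) :
    ∃ A : ℝ → ℝ,
      (∀ C : Set ℝ, C ⊆ Set.Ici 0 → IsCompact C → ∀ η : ℝ, 0 < η →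
        ∃ ε₀ : ℝ, 0 < ε₀ ∧ ∀ ε : ℝ, 0 < ε → ε < ε₀ → ∀ u ∈ C,
          |(1 / ε) * g (ε ^ 2 * u) - A u| < η) ∧
      (∀ x : H, ∃ η : H → ℝ,
        (∀ ε : ℝ, 0 < ε → ∀ v : H, η (hdil ε v) = ε * η v) ∧
        (∀ v w : H, η (Hmul v w) ≤ η v + η w) ∧
        (∀ K : Set H, IsCompact K → ∀ τ : ℝ, 0 < τ → ∃ ε₀ : ℝ, 0 < ε₀ ∧
          ∀ ε : ℝ, 0 < ε → ε < ε₀ → ∀ v ∈ K,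
            |(1 / ε) * rho0 g (Hmul (Hinv x) (Hmul x (hdil ε v))) - η v| < τ)) := by
  have hβ (x y : H) : Tendsto (fun ε => bdil k g ε⁻¹ (Hmul (bdil k g ε x) (bdil k g ε y)))
      (𝓝[>] 0) (𝓝 (β x y)) := by
    refine Metric.tendsto_nhds.2 fun η hη => (nhdsGT_basis 0).eventually_iff.2 ?_
    obtain ⟨ε₀, hε₀, hK⟩ := hA4 {x, y} (toFinite _).isCompact η hη
    exact ⟨ε₀, hε₀, fun ε hε => by
      simpa only [dist_eq_norm] using hK ε hε.1 hε.2 x (by simp) y (by simp)⟩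
  obtain ⟨L, hL0, hL1, hφ⟩ := exists_tendsto_inv_mul_g_sq hk_mono hk_nonneg hg_right
    (tendsto_Ginv_inv_mul_g_sq (hβ ((1, 0), 0) ((0, 1 / 2), 0)) (by norm_num [omega2]))
  have hA (C : Set ℝ) (hC0 : C ⊆ Ici 0) (hC : IsCompact C) :=
    tendstoUniformlyOn_one_div_mul_g hk_nonneg hg_right hφ hC0 hC.bddAbove
  refine ⟨fun u => L * √u, fun C hC0 hC => ?_, fun x => ⟨rho0 (fun u => L * √u),
    fun ε hε => rho0_mul_sqrt_hdil L hε.le, rho0_mul_sqrt_Hmul_le hL0 hL1, fun K hK => ?_⟩⟩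
  · simpa only [Real.dist_eq] using tendstoUniformlyOn_nhdsGT_zero_iff.1 (hA C hC0 hC)
  · have hKc := hK.image (continuous_abs.comp continuous_snd)
    have hK0 : (fun v : H => |v.2|) '' K ⊆ Ici 0 := image_subset_iff.2 fun v _ => abs_nonneg v.2
    simpa only [Hmul_Hinv_Hmul, Real.dist_eq] using tendstoUniformlyOn_nhdsGT_zero_iff.1
      (tendstoUniformlyOn_one_div_mul_rho0_hdil (hA _ hK0 hKc))

/-- if axiom A4 holds for (H(1),ρ,δ̄) then the limit
A(ū) = lim_{ε→0⁺} (1/ε)·g(ε²ū) exists uniformly on compact subsets of [0,∞),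
and consequently id : (H(1),d) → (H(1),ρ) is metrically differentiable
everywhere. -/
theorem A4_implies_metric_differentiability
(k g : ℝ → ℝ)
    (hk_conv : ConvexOn ℝ (Set.Ici 0) k)
    (hk_mono : StrictMonoOn k (Set.Ici 0))
    (hk_cont : ContinuousOn k (Set.Ici 0))
    (hk0 : k 0 = 0)
    (hk_nonneg : ∀ t ∈ Set.Ici (0:ℝ), 0 ≤ k t)
    (hg_left : ∀ s ∈ Set.Ici (0:ℝ), g (Ginv k s) = s)
    (hg_right : ∀ t ∈ Set.Ici (0:ℝ), 0 ≤ g t ∧ Ginv k (g t) = t)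
    (β : H → H → H)
    (hA4 : ∀ K : Set H, IsCompact K → ∀ η : ℝ, 0 < η → ∃ ε₀ : ℝ, 0 < ε₀ ∧
      ∀ ε : ℝ, 0 < ε → ε < ε₀ → ∀ x ∈ K, ∀ y ∈ K,
        ‖bdil k g ε⁻¹ (Hmul (bdil k g ε x) (bdil k g ε y)) - β x y‖ < η) :
    ∃ A : ℝ → ℝ,
      (∀ C : Set ℝ, C ⊆ Set.Ici 0 → IsCompact C → ∀ η : ℝ, 0 < η →
        ∃ ε₀ : ℝ, 0 < ε₀ ∧ ∀ ε : ℝ, 0 < ε → ε < ε₀ → ∀ u ∈ C,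
          |(1 / ε) * g (ε ^ 2 * u) - A u| < η) ∧
      (∀ x : H, ∃ η : H → ℝ,
        (∀ ε : ℝ, 0 < ε → ∀ v : H, η (hdil ε v) = ε * η v) ∧
        (∀ v w : H, η (Hmul v w) ≤ η v + η w) ∧
        (∀ K : Set H, IsCompact K → ∀ τ : ℝ, 0 < τ → ∃ ε₀ : ℝ, 0 < ε₀ ∧
          ∀ ε : ℝ, 0 < ε → ε < ε₀ → ∀ v ∈ K,
            |(1 / ε) * rho0 g (Hmul (Hinv x) (Hmul x (hdil ε v))) - η v| < τ)) :=
  A4_implies_metric_differentiability_general k g hk_mono hk_nonneg hg_right β hA4
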